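/- Let (X,𝒜,μ) be a σ-finite measure space with Poisson measure μ*. If {𝒜_n} is an increasing sequence of σ-finite sub-σ-fields of 𝒜, then the Poissonian factor of the σ-field generated by ∪_n 𝒜_n equals the σ-field generated by ∪_n 𝒜_n*, modulo μ*-null sets. -/

import Mathlib

open MeasureTheory ProbabilityTheory Real

noncomputable section

/-- `P` is the distribution of the Poisson point process with intensity `μ`. -/
def IsPoissonMeasure {X : Type*} [MeasurableSpace X] (μ : Measure X)
    (P : Measure (Measure X)) : Prop :=
  IsProbabilityMeasure P ∧
  ∀ (k : ℕ) (A : Fin k → Set X), (∀ i, MeasurableSet (A i)) →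
    Pairwise (Function.onFun Disjoint A) → (∀ i, μ (A i) ≠ ⊤) →
    iIndepFun (fun i => fun ν : Measure X => ν (A i)) P ∧
    ∀ i (n : ℕ), P {ν : Measure X | ν (A i) = n} =
      ENNReal.ofReal (exp (-(μ (A i)).toReal) * (μ (A i)).toReal ^ n / n.factorial)

/-- The Poissonian factor `ℱ*` of a sub-σ-field `ℱ`: the σ-field on the configuration
space generated by the counting maps `ν ↦ ν F`, for `F ∈ ℱ`. -/
def poissonianFactor {X : Type*} (mX : MeasurableSpace X) (F : MeasurableSpace X) :
    MeasurableSpace (@Measure X mX) :=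
  ⨆ s ∈ {s : Set X | MeasurableSet[F] s},
    MeasurableSpace.comap (fun ν : @Measure X mX => ν s) inferInstance

/-- Two σ-fields on a measure space coincide modulo null sets. -/
def EqModNull {Ω : Type*} [MeasurableSpace Ω] (P : Measure Ω)
    (F G : MeasurableSpace Ω) : Prop :=
  (∀ s, MeasurableSet[F] s → ∃ t, MeasurableSet[G] t ∧ P (symmDiff s t) = 0) ∧
  (∀ s, MeasurableSet[G] s → ∃ t, MeasurableSet[F] t ∧ P (symmDiff s t) = 0)

open Filter Set
open scoped symmDiff ENNReal

/-- The symmetric difference of two countable unions is contained in the union of the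
symmetric differences. -/
lemma iUnion_symmDiff_iUnion_subset {α : Type*} {ι : Sort*} (f t : ι → Set α) :
    ((⋃ i, f i) ∆ (⋃ i, t i)) ⊆ ⋃ i, (f i ∆ t i) := by
  intro x hx
  rw [Set.mem_symmDiff] at hx
  rcases hx with ⟨hf, ht⟩ | ⟨ht, hf⟩
  · obtain ⟨i, hi⟩ := Set.mem_iUnion.1 hf
    exact Set.mem_iUnion.2 ⟨i, Set.mem_symmDiff.2
      (Or.inl ⟨hi, fun h => ht (Set.mem_iUnion.2 ⟨i, h⟩)⟩)⟩
  · obtain ⟨i, hi⟩ := Set.mem_iUnion.1 ht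
    exact Set.mem_iUnion.2 ⟨i, Set.mem_symmDiff.2
      (Or.inr ⟨hi, fun h => hf (Set.mem_iUnion.2 ⟨i, h⟩)⟩)⟩

/-- For a Poisson measure, the probability that a configuration charges a fixed set `B`
of finite intensity is at most `μ B`. -/
lemma IsPoissonMeasure.prob_ne_zero_le {X : Type*} [MeasurableSpace X] {μ : Measure X}
    {P : Measure (Measure X)} (hP : IsPoissonMeasure μ P) {B : Set X}
    (hB : MeasurableSet B) (hμB : μ B ≠ ⊤) :
    P {ν : Measure X | ν B ≠ 0} ≤ μ B := by
  haveI := hP.1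
  obtain ⟨-, h2⟩ := hP.2 1 (fun _ => B) (fun _ => hB) Subsingleton.pairwise (fun _ => hμB)
  have h0 := h2 0 0
  simp only [Nat.cast_zero, pow_zero, mul_one, Nat.factorial_zero, Nat.cast_one, div_one] at h0
  have hmeas : MeasurableSet {ν : Measure X | ν B = 0} :=
    Measure.measurable_coe hB (measurableSet_singleton 0)
  have hset : {ν : Measure X | ν B ≠ 0} = {ν : Measure X | ν B = 0}ᶜ := rfl
  rw [hset, prob_compl_eq_one_sub hmeas, h0]
  calc 1 - ENNReal.ofReal (exp (-(μ B).toReal))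
      ≤ ENNReal.ofReal ((μ B).toReal) := by
        rw [← ENNReal.ofReal_one, ← ENNReal.ofReal_sub _ (exp_nonneg _)]
        apply ENNReal.ofReal_le_ofReal
        nlinarith [Real.add_one_le_exp (-(μ B).toReal)]
    _ = μ B := ENNReal.ofReal_toReal hμB

/-- for an increasing sequence of σ-finite sub-σ-fields `𝒜ₙ`, the
Poissonian factor of the σ-field generated by `⋃ₙ 𝒜ₙ` equals the σ-field generated
by `⋃ₙ 𝒜ₙ*`, modulo `μ*`-null sets. -/
theorem poissonianFactor_iSup
    {X : Type*} [MeasurableSpace X] (μ : Measure X) [SigmaFinite μ]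
    (P : Measure (Measure X)) (hP : IsPoissonMeasure μ P)
    (𝒜 : ℕ → MeasurableSpace X) (hle : ∀ n, 𝒜 n ≤ ‹MeasurableSpace X›)
    (hmono : ∀ {n m : ℕ}, n ≤ m → 𝒜 n ≤ 𝒜 m)
    (hsf : ∀ n, SigmaFinite (μ.trim (hle n))) :
    EqModNull P (poissonianFactor ‹MeasurableSpace X› (⨆ n, 𝒜 n))
      (⨆ n, poissonianFactor ‹MeasurableSpace X› (𝒜 n)) := by
  classical
  haveI := hP.1
  have hif : (⨆ n, 𝒜 n) ≤ ‹MeasurableSpace X› := iSup_le hle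
  -- counting maps of `𝒜 n`-sets are measurable for the iSup of the Poissonian factors
  have hcount : ∀ (n : ℕ) (B : Set X), MeasurableSet[𝒜 n] B →
      Measurable[⨆ n, poissonianFactor ‹MeasurableSpace X› (𝒜 n)]
        (fun ν : Measure X => ν B) := by
    intro n B hB
    rw [measurable_iff_comap_le]
    refine le_trans ?_ (le_iSup (fun n => poissonianFactor ‹MeasurableSpace X› (𝒜 n)) n)
    exact le_iSup₂ (f := fun (s : Set X) (_ : s ∈ {s : Set X | MeasurableSet[𝒜 n] s}) =>
      MeasurableSpace.comap (fun ν : Measure X => ν s) inferInstance) B hB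
  -- the union of the `𝒜 n` is a set algebra generating the iSup
  have h𝒞alg : IsSetAlgebra {s : Set X | ∃ n, MeasurableSet[𝒜 n] s} := by
    refine ⟨⟨0, @MeasurableSet.empty _ (𝒜 0)⟩, fun s hs => ⟨hs.choose, hs.choose_spec.compl⟩, ?_⟩
    rintro s t ⟨n, hs⟩ ⟨m, ht⟩
    exact ⟨max n m, MeasurableSet.union (hmono (le_max_left n m) _ hs)
      (hmono (le_max_right n m) _ ht)⟩
  have hgen : (⨆ n, 𝒜 n) =
      MeasurableSpace.generateFrom {s : Set X | ∃ n, MeasurableSet[𝒜 n] s} := by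
    apply le_antisymm
    · exact iSup_le fun n s hs => MeasurableSpace.measurableSet_generateFrom ⟨n, hs⟩
    · exact MeasurableSpace.generateFrom_le fun t ht => (le_iSup 𝒜 ht.choose) t ht.choose_spec
  haveI := hsf 0
  have hdense : @Measure.MeasureDense X (⨆ n, 𝒜 n) (μ.trim hif) {s : Set X | ∃ n, MeasurableSet[𝒜 n] s} := by
    refine Measure.MeasureDense.of_generateFrom_isSetAlgebra_sigmaFinite (m := ⨆ n, 𝒜 n)
      (μ := μ.trim hif) h𝒞alg ?_ hgen
    refine ⟨fun m => spanningSets (μ.trim (hle 0)) m,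
      fun m => ⟨0, @measurableSet_spanningSets X (𝒜 0) (μ.trim (hle 0)) (hsf 0) m⟩, ?_, @iUnion_spanningSets X (𝒜 0) (μ.trim (hle 0)) (hsf 0)⟩
    intro m
    have h1 : MeasurableSet[⨆ n, 𝒜 n] (spanningSets (μ.trim (hle 0)) m) :=
      (le_iSup 𝒜 0) _ (@measurableSet_spanningSets X (𝒜 0) (μ.trim (hle 0)) (hsf 0) m)
    rw [trim_measurableSet_eq hif h1,
      ← trim_measurableSet_eq (hle 0) (@measurableSet_spanningSets X (𝒜 0) (μ.trim (hle 0)) (hsf 0) m)]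
    exact @measure_spanningSets_lt_top X (𝒜 0) (μ.trim (hle 0)) (hsf 0) m
  -- key approximation: finite-intensity case
  have keyFin : ∀ A : Set X, MeasurableSet[⨆ n, 𝒜 n] A → μ A ≠ ⊤ →
      ∃ g : Measure X → ℝ≥0∞,
        Measurable[⨆ n, poissonianFactor ‹MeasurableSpace X› (𝒜 n)] g ∧
        ∀ᵐ ν ∂P, ν A = g ν := by
    intro A hA hμA
    have happrox : ∀ k : ℕ, ∃ B, (∃ n, MeasurableSet[𝒜 n] B) ∧
        μ (A ∆ B) ≤ (2⁻¹ : ℝ≥0∞) ^ k := by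
      intro k
      have hμA' : μ.trim hif A ≠ ⊤ := by rwa [trim_measurableSet_eq hif hA]
      obtain ⟨B, hB𝒞, hBlt⟩ := @Measure.MeasureDense.approx X (⨆ n, 𝒜 n) (μ.trim hif) _ hdense A hA
        hμA' ((2⁻¹ : ℝ) ^ k) (by positivity)
      refine ⟨B, hB𝒞, ?_⟩
      obtain ⟨n, hBn⟩ := hB𝒞
      have hBm : MeasurableSet[⨆ n, 𝒜 n] B := (le_iSup 𝒜 n) _ hBn
      rw [trim_measurableSet_eq hif (hA.symmDiff hBm)] at hBlt
      refine hBlt.le.trans (le_of_eq ?_)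
      rw [ENNReal.ofReal_pow (by norm_num), ENNReal.ofReal_inv_of_pos (by norm_num)]
      norm_num
    choose B hB𝒞 hBle using happrox
    choose n hn using hB𝒞
    refine ⟨fun ν => limsup (fun k => ν (B k)) atTop,
      Measurable.limsup fun k => hcount (n k) (B k) (hn k), ?_⟩
    have hsum : ∑' k, P {ν : Measure X | ν (A ∆ B k) ≠ 0} ≠ ⊤ := by
      have hle1 : ∀ k, P {ν : Measure X | ν (A ∆ B k) ≠ 0} ≤ (2⁻¹ : ℝ≥0∞) ^ k := by
        intro k
        have hABamb : MeasurableSet (A ∆ B k) :=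
          (hif _ hA).symmDiff (hle (n k) _ (hn k))
        have hABfin : μ (A ∆ B k) ≠ ⊤ :=
          ne_top_of_le_ne_top (by simp : ((2⁻¹ : ℝ≥0∞) ^ k) ≠ ⊤) (hBle k)
        exact (hP.prob_ne_zero_le hABamb hABfin).trans (hBle k)
      refine ne_top_of_le_ne_top ?_ (ENNReal.tsum_le_tsum hle1)
      rw [ENNReal.tsum_geometric]
      simp [ENNReal.one_sub_inv_two]
    have hBC : P (limsup (fun k => {ν : Measure X | ν (A ∆ B k) ≠ 0}) atTop) = 0 :=
      measure_limsup_atTop_eq_zero hsum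
    rw [ae_iff]
    refine measure_mono_null ?_ hBC
    intro ν hν
    by_contra hcon
    apply hν
    rw [mem_limsup_iff_frequently_mem, not_frequently] at hcon
    have hev : ∀ᶠ k in atTop, ν (B k) = ν A := by
      filter_upwards [hcon] with k hk
      have hk0 : ν (A ∆ B k) = 0 := not_not.1 hk
      exact (measure_congr (measure_symmDiff_eq_zero_iff.1 hk0)).symm
    show ν A = limsup (fun k => ν (B k)) atTop
    exact ((limsup_congr hev).trans (limsup_const (ν A))).symm
  -- key approximation: general case
  have key : ∀ A : Set X, MeasurableSet[⨆ n, 𝒜 n] A →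
      ∃ g : Measure X → ℝ≥0∞,
        Measurable[⨆ n, poissonianFactor ‹MeasurableSpace X› (𝒜 n)] g ∧
        ∀ᵐ ν ∂P, ν A = g ν := by
    intro A hA
    have hS0 : ∀ m, MeasurableSet[𝒜 0] (spanningSets (μ.trim (hle 0)) m) := fun m =>
      @measurableSet_spanningSets X (𝒜 0) (μ.trim (hle 0)) (hsf 0) m
    have hSm' : ∀ m, MeasurableSet[⨆ n, 𝒜 n] (spanningSets (μ.trim (hle 0)) m) := fun m =>
      (le_iSup 𝒜 0) _ (hS0 m)
    have hSfin : ∀ m, μ (spanningSets (μ.trim (hle 0)) m) ≠ ⊤ := by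
      intro m
      rw [← trim_measurableSet_eq (hle 0) (hS0 m)]
      exact (@measure_spanningSets_lt_top X (𝒜 0) (μ.trim (hle 0)) (hsf 0) m).ne
    have hfin : ∀ m, μ (A ∩ spanningSets (μ.trim (hle 0)) m) ≠ ⊤ := fun m =>
      ne_top_of_le_ne_top (hSfin m) (measure_mono inter_subset_right)
    choose g hg hgae using fun m =>
      keyFin (A ∩ spanningSets (μ.trim (hle 0)) m) (hA.inter (hSm' m)) (hfin m)
    refine ⟨fun ν => ⨆ m, g m ν, Measurable.iSup (mδ := ⨆ n, poissonianFactor ‹MeasurableSpace X› (𝒜 n)) hg, ?_⟩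
    filter_upwards [ae_all_iff.2 hgae] with ν hν
    have hd : Directed (· ⊆ ·) (fun m => A ∩ spanningSets (μ.trim (hle 0)) m) := by
      refine Monotone.directed_le ?_
      exact fun i j hij => inter_subset_inter_right A ((@monotone_spanningSets X (𝒜 0) (μ.trim (hle 0)) (hsf 0)) hij)
    have hA' : ν A = ⨆ m, ν (A ∩ spanningSets (μ.trim (hle 0)) m) := by
      rw [← Directed.measure_iUnion hd, ← inter_iUnion, @iUnion_spanningSets X (𝒜 0) (μ.trim (hle 0)) (hsf 0), inter_univ]
    rw [hA']
    exact iSup_congr hν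
  -- conclusion
  constructor
  · -- sets of the big Poissonian factor are approximable: use the σ-algebra of
    -- approximable sets
    have hPF_le_D : poissonianFactor ‹MeasurableSpace X› (⨆ n, 𝒜 n) ≤
        ({ MeasurableSet' := fun s => ∃ t,
              MeasurableSet[⨆ n, poissonianFactor ‹MeasurableSpace X› (𝒜 n)] t ∧ P (s ∆ t) = 0
           measurableSet_empty := ⟨∅,
             @MeasurableSet.empty _ (⨆ n, poissonianFactor ‹MeasurableSpace X› (𝒜 n)), by simp⟩
           measurableSet_compl := fun s hs => by
             obtain ⟨t, ht, hst⟩ := hs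
             exact ⟨tᶜ, ht.compl, by rwa [compl_symmDiff_compl]⟩
           measurableSet_iUnion := fun f hf => by
             choose t ht hft using hf
             exact ⟨⋃ i, t i, MeasurableSet.iUnion ht,
               measure_mono_null (iUnion_symmDiff_iUnion_subset f t)
                 (measure_iUnion_null hft)⟩ } : MeasurableSpace (Measure X)) := by
      refine iSup₂_le fun A hA => ?_
      obtain ⟨g, hg, hgae⟩ := key A hA
      intro s hs
      obtain ⟨Bset, hBset, rfl⟩ := hs
      refine ⟨g ⁻¹' Bset, hg hBset, ?_⟩
      refine measure_mono_null ?_ (ae_iff.1 hgae)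
      intro ν hν
      rw [Set.mem_symmDiff] at hν
      simp only [Set.mem_preimage] at hν
      show ¬ ν A = g ν
      rcases hν with ⟨h1, h2⟩ | ⟨h1, h2⟩
      · intro he; exact h2 (by rw [← he]; exact h1)
      · intro he; exact h2 (by rw [he]; exact h1)
    intro s hs
    exact hPF_le_D s hs
  · intro s hs
    refine ⟨s, ?_, by simp [symmDiff_self]⟩
    have hmon : (⨆ n, poissonianFactor ‹MeasurableSpace X› (𝒜 n)) ≤
        poissonianFactor ‹MeasurableSpace X› (⨆ n, 𝒜 n) := by
      refine iSup_le fun k => iSup₂_le fun Bs hBs => ?_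
      exact le_iSup₂ (f := fun (t : Set X)
          (_ : t ∈ {t : Set X | MeasurableSet[⨆ n, 𝒜 n] t}) =>
        MeasurableSpace.comap (fun ν : Measure X => ν t) inferInstance) Bs ((le_iSup 𝒜 k) _ hBs)
    exact hmon s hs
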